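/- Let p ≥ 1 be an integer and θ > 0, and suppose A is maximal monotone with A⁻¹(0) = {x : 0 ∈ A x} nonempty. Let (x, λ, y) be a global solution of the closed-loop control system on [0, ∞) with λ nondecreasing. Then there exists x̄ ∈ H with 0 ∈ A x̄ such that x(t) converges weakly to x̄ as t → +∞, i.e. ⟪x(t) − x̄, h⟫ → 0 for every h ∈ H. -/

import Mathlib

open scoped Pointwise
open RealInnerProductSpace Filter Topology Set Metric

/-- A solution of the closed-loop control system on the time set `T`:
`x` is continuously differentiable with `x'(t) = y(t) - x(t)`,
`y(t)` is the resolvent point `(I + λ(t)A)⁻¹ x(t)` (i.e. `x(t) - y(t) ∈ λ(t) • A (y t)`),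
`λ` is continuous and positive, and the algebraic equation
`λ(t) ‖y(t) - x(t)‖^{p-1} = θ` holds. -/
def IsCLSolution {H : Type*} [NormedAddCommGroup H] [InnerProductSpace ℝ H]
    (A : H → Set H) (p : ℕ) (θ : ℝ) (T : Set ℝ)
    (x : ℝ → H) (lam : ℝ → ℝ) (y : ℝ → H) : Prop :=
  (∀ t ∈ T, 0 < lam t) ∧ ContinuousOn lam T ∧
  (∀ t ∈ T, x t - y t ∈ lam t • A (y t)) ∧
  (∀ t ∈ T, HasDerivWithinAt x (y t - x t) T t) ∧
  ContinuousOn (fun t => y t - x t) T ∧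
  (∀ t ∈ T, lam t * ‖y t - x t‖ ^ (p - 1) = θ)

/-!
For every zero `z` of `A` the monotonicity of `A` gives
`d/dt ‖x t - z‖ ^ 2 = 2 ⟪x t - z, y t - x t⟫ ≤ -2 ‖y t - x t‖ ^ 2`, so `‖x t - z‖` converges.
The speed `‖y t - x t‖` is nonincreasing (from `λ ‖y - x‖ ^ (p - 1) = θ` with `λ`
nondecreasing when `p ≥ 2`, from the firm nonexpansiveness of `I - (I + θ A)⁻¹` when `p = 1`),
so the decay estimate forces it to tend to `0`. Then `(x t - y t) / λ t ∈ A (y t)` tends to `0`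
strongly while `y t - x t → 0`, and the weak-strong closedness of the graph of a maximal monotone
operator makes every weak cluster point of `x` a zero of `A`. Opial's argument concludes: the
weak limit points are unique because `‖x t - w₀‖ ^ 2 - ‖x t - w₁‖ ^ 2` converges, and weak
compactness of bounded sets provides one.
-/

theorem Convex.antitoneOn_of_hasDerivWithinAt_nonpos {D : Set ℝ} (hD : Convex ℝ D)
    {f f' : ℝ → ℝ} (hf : ∀ t ∈ D, HasDerivWithinAt f (f' t) D t) (hf' : ∀ t ∈ D, f' t ≤ 0) :
    AntitoneOn f D :=
  _root_.antitoneOn_of_hasDerivWithinAt_nonpos hD (fun t ht => (hf t ht).continuousWithinAt)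
    (fun t ht => (hf t (interior_subset ht)).mono interior_subset)
    (fun t ht => hf' t (interior_subset ht))

theorem AntitoneOn.exists_tendsto_atTop {f : ℝ → ℝ} {a b : ℝ} (hf : AntitoneOn f (Ici a))
    (hb : ∀ t ∈ Ici a, b ≤ f t) :
    ∃ c, b ≤ c ∧ (∀ t ∈ Ici a, c ≤ f t) ∧ Tendsto f atTop (𝓝 c) := by
  set g : ℝ → ℝ := fun t => f (max t a)
  have hg : Antitone g := fun s t hst =>
    hf (le_max_right s a) (le_max_right t a) (max_le_max hst le_rfl)
  have hg_bdd : BddBelow (range g) := ⟨b, by rintro _ ⟨t, rfl⟩; exact hb _ (le_max_right t a)⟩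
  have hfg : ∀ t ∈ Ici a, g t = f t := fun t ht => by simp [g, max_eq_left (mem_Ici.mp ht)]
  refine ⟨⨅ t, g t, le_ciInf fun t => hb _ (le_max_right t a),
    fun t ht => hfg t ht ▸ ciInf_le hg_bdd t, ?_⟩
  exact (tendsto_atTop_ciInf hg hg_bdd).congr' <|
    (eventually_ge_atTop a).mono fun t ht => hfg t ht

theorem antitoneOn_of_mul_pow_eq {s : Set ℝ} {lam g : ℝ → ℝ} {k : ℕ} {θ : ℝ}
    (hlam : MonotoneOn lam s) (hpos : ∀ t ∈ s, 0 < lam t) (hg : ∀ t ∈ s, 0 ≤ g t) (hk : k ≠ 0)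
    (h : ∀ t ∈ s, lam t * g t ^ k = θ) : AntitoneOn g s := by
  intro r hr t ht hrt
  refine (pow_le_pow_iff_left₀ (hg t ht) (hg r hr) hk).mp <| le_of_mul_le_mul_left ?_ (hpos r hr)
  calc lam r * g t ^ k ≤ lam t * g t ^ k :=
      mul_le_mul_of_nonneg_right (hlam hr ht hrt) (pow_nonneg (hg t ht) k)
    _ = lam r * g r ^ k := by rw [h t ht, h r hr]

theorem HasDerivWithinAt.tendsto_slope_zero_right_of_Ici {E : Type*} [NormedAddCommGroup E]
    [NormedSpace ℝ E] {f : ℝ → E} {f' : E} {t : ℝ} (hf : HasDerivWithinAt f f' (Ici t) t) :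
    Tendsto (fun h => h⁻¹ • (f (t + h) - f t)) (𝓝[>] 0) (𝓝 f') := by
  have hslope := (hasDerivWithinAt_iff_tendsto_slope' (lt_irrefl t)).mp hf.Ioi_of_Ici
  have hshift : Tendsto (t + ·) (𝓝[>] 0) (𝓝[>] t) := by
    have := Filter.map_add_left_nhdsGT (c := t) (a := (0 : ℝ))
    rw [add_zero] at this
    exact this.le
  simpa [Function.comp_def, slope_def_module] using hslope.comp hshift

theorem exists_eventually_norm_le_of_tendsto_norm_sub_sq {E ι : Type*}
    [SeminormedAddCommGroup E] {l : Filter ι} {x : ι → E} {z : E} {L : ℝ}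
    (hL : Tendsto (fun t => ‖x t - z‖ ^ 2) l (𝓝 L)) : ∃ M, ∀ᶠ t in l, ‖x t‖ ≤ M := by
  refine ⟨Real.sqrt (L + 1) + ‖z‖, (hL.eventually (gt_mem_nhds (lt_add_one L))).mono
    fun t ht => ?_⟩
  calc ‖x t‖ ≤ ‖x t - z‖ + ‖z‖ := norm_le_norm_sub_add _ _
    _ ≤ Real.sqrt (L + 1) + ‖z‖ := by gcongr; exact Real.le_sqrt_of_sq_le ht.le

section MonotoneOperator

variable {H : Type*} [NormedAddCommGroup H] [InnerProductSpace ℝ H]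

def IsMonotoneOperator (A : H → Set H) : Prop :=
  ∀ x y u v : H, u ∈ A x → v ∈ A y → 0 ≤ ⟪u - v, x - y⟫

variable {A : H → Set H}

/-- Firm nonexpansiveness of `I - (I + c A)⁻¹`: here `b = (I + c A)⁻¹ a`, `b' = (I + c A)⁻¹ a'`. -/
theorem IsMonotoneOperator.norm_sq_le_inner_of_sub_mem_smul (hA : IsMonotoneOperator A)
    {c : ℝ} (hc : 0 < c) {a b a' b' : H} (h : a - b ∈ c • A b) (h' : a' - b' ∈ c • A b') :
    ‖(a - b) - (a' - b')‖ ^ 2 ≤ ⟪(a - b) - (a' - b'), a - a'⟫ := by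
  rw [Set.mem_smul_set_iff_inv_smul_mem₀ hc.ne'] at h h'
  have hmono := hA _ _ _ _ h h'
  rw [← smul_sub, real_inner_smul_left] at hmono
  have hd : 0 ≤ ⟪(a - b) - (a' - b'), b - b'⟫ := nonneg_of_mul_nonneg_right hmono (by positivity)
  have hsplit : a - a' = (b - b') + ((a - b) - (a' - b')) := by abel
  rw [hsplit, inner_add_right, real_inner_self_eq_norm_sq]
  linarith

theorem IsMonotoneOperator.mem_of_tendsto_of_weak_tendsto (hA : IsMonotoneOperator A)
    (hmax : ∀ v x : H, (∀ z u : H, u ∈ A z → 0 ≤ ⟪v - u, x - z⟫) → v ∈ A x)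
    {ι : Type*} {G : Filter ι} [G.NeBot] {y v : ι → H} {w v₀ : H}
    (hmem : ∀ᶠ t in G, v t ∈ A (y t)) (hv : Tendsto v G (𝓝 v₀))
    (hy : ∀ h, Tendsto (fun t => ⟪y t, h⟫) G (𝓝 ⟪w, h⟫)) (hbdd : ∃ C, ∀ᶠ t in G, ‖y t‖ ≤ C) :
    v₀ ∈ A w := by
  obtain ⟨C, hC⟩ := hbdd
  refine hmax v₀ w fun z u hu => ?_
  have hsmall : Tendsto (fun t => ⟪v t - v₀, y t - z⟫) G (𝓝 0) := by
    have hv₀ : Tendsto (fun t => ‖v t - v₀‖ * (C + ‖z‖)) G (𝓝 0) := by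
      simpa using (tendsto_sub_nhds_zero_iff.mpr hv).norm.mul_const (C + ‖z‖)
    refine squeeze_zero_norm' ?_ hv₀
    filter_upwards [hC] with t ht
    calc ‖⟪v t - v₀, y t - z⟫‖ ≤ ‖v t - v₀‖ * ‖y t - z‖ := norm_inner_le_norm _ _
      _ ≤ ‖v t - v₀‖ * (C + ‖z‖) := by
        gcongr
        exact (norm_sub_le _ _).trans (by linarith)
  have hlim : Tendsto (fun t => ⟪v t - u, y t - z⟫) G (𝓝 ⟪v₀ - u, w - z⟫) := by
    have hmain := hsmall.add ((hy (v₀ - u)).sub_const ⟪z, v₀ - u⟫)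
    rw [zero_add, ← inner_sub_left, real_inner_comm (v₀ - u) (w - z)] at hmain
    refine hmain.congr fun t => ?_
    rw [← inner_sub_left, real_inner_comm (v₀ - u) (y t - z), ← inner_add_left, sub_add_sub_cancel]
  exact ge_of_tendsto hlim (hmem.mono fun t ht => hA _ _ _ _ ht hu)

end MonotoneOperator

section Opial

variable {H : Type*} [NormedAddCommGroup H] [InnerProductSpace ℝ H] {ι : Type*}

/-- `‖x - w₀‖ ^ 2 - ‖x - w₁‖ ^ 2` is an affine function of `⟪x, w₁ - w₀⟫`. -/
theorem eq_of_weak_clusterPt_of_tendsto_norm_sub_sq {l G₀ G₁ : Filter ι} [G₀.NeBot] [G₁.NeBot]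
    (hG₀ : G₀ ≤ l) (hG₁ : G₁ ≤ l) {x : ι → H} {w₀ w₁ : H} {L₀ L₁ : ℝ}
    (hL₀ : Tendsto (fun t => ‖x t - w₀‖ ^ 2) l (𝓝 L₀))
    (hL₁ : Tendsto (fun t => ‖x t - w₁‖ ^ 2) l (𝓝 L₁))
    (hw₀ : ∀ h, Tendsto (fun t => ⟪x t, h⟫) G₀ (𝓝 ⟪w₀, h⟫))
    (hw₁ : ∀ h, Tendsto (fun t => ⟪x t, h⟫) G₁ (𝓝 ⟪w₁, h⟫)) :
    w₀ = w₁ := by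
  set ℓ := (L₀ - L₁ - ‖w₀‖ ^ 2 + ‖w₁‖ ^ 2) / 2
  have hlim : Tendsto (fun t => ⟪x t, w₁ - w₀⟫) l (𝓝 ℓ) := by
    refine (((hL₀.sub hL₁).sub_const (‖w₀‖ ^ 2)).add_const (‖w₁‖ ^ 2)).div_const 2
      |>.congr fun t => ?_
    simp only [← real_inner_self_eq_norm_sq, inner_sub_left, inner_sub_right,
      real_inner_comm (x t)]
    ring
  have h₀ : ⟪w₀, w₁ - w₀⟫ = ℓ := tendsto_nhds_unique (hw₀ _) (hlim.mono_left hG₀)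
  have h₁ : ⟪w₁, w₁ - w₀⟫ = ℓ := tendsto_nhds_unique (hw₁ _) (hlim.mono_left hG₁)
  have : ⟪w₁ - w₀, w₁ - w₀⟫ = 0 := by rw [inner_sub_left, h₀, h₁, sub_self]
  exact (sub_eq_zero.mp (inner_self_eq_zero.mp this)).symm

variable [CompleteSpace H]

theorem tendsto_toWeakDual_toDual_iff {l : Filter ι} {x : ι → H} {w : H} :
    Tendsto (fun t => StrongDual.toWeakDual (InnerProductSpace.toDual ℝ H (x t))) l
        (𝓝 (StrongDual.toWeakDual (InnerProductSpace.toDual ℝ H w))) ↔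
      ∀ h, Tendsto (fun t => ⟪x t, h⟫) l (𝓝 ⟪w, h⟫) :=
  tendsto_iff_forall_eval_tendsto_topDualPairing

theorem exists_weak_tendsto_of_opial {l : Filter ι} [l.NeBot] {x : ι → H} {S : Set H}
    (hS : S.Nonempty) (hdist : ∀ z ∈ S, ∃ L, Tendsto (fun t => ‖x t - z‖ ^ 2) l (𝓝 L))
    (hclust : ∀ w (G : Filter ι), G.NeBot → G ≤ l →
      (∀ h, Tendsto (fun t => ⟪x t, h⟫) G (𝓝 ⟪w, h⟫)) → w ∈ S) :
    ∃ xbar ∈ S, ∀ h, Tendsto (fun t => ⟪x t, h⟫) l (𝓝 ⟪xbar, h⟫) := by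
  -- Banach–Alaoglu in `WeakDual ℝ H`, transported to `H` by the Riesz isomorphism.
  set e : H → WeakDual ℝ H := fun v => StrongDual.toWeakDual (InnerProductSpace.toDual ℝ H v)
  set r : WeakDual ℝ H → H := fun φ => (InnerProductSpace.toDual ℝ H).symm φ.toStrongDual
  have he : ∀ φ, e (r φ) = φ := (InnerProductSpace.toDual ℝ H).apply_symm_apply
  obtain ⟨z, hz⟩ := hS
  obtain ⟨L, hL⟩ := hdist z hz
  obtain ⟨M, hM⟩ := exists_eventually_norm_le_of_tendsto_norm_sub_sq hL
  set K : Set (WeakDual ℝ H) := WeakDual.toStrongDual ⁻¹' closedBall 0 M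
  have hxK : ∀ᶠ t in l, e (x t) ∈ K := hM.mono fun t ht => by
    simpa [K, e] using ht
  have hcluster : ∀ φ, MapClusterPt φ l (e ∘ x) → ∃ U : Ultrafilter ι, ↑U ≤ l ∧
      ∀ h, Tendsto (fun t => ⟪x t, h⟫) U (𝓝 ⟪r φ, h⟫) := by
    intro φ hφ
    obtain ⟨U, hUl, hU⟩ := mapClusterPt_iff_ultrafilter.mp hφ
    rw [← he φ] at hU
    exact ⟨U, hUl, tendsto_toWeakDual_toDual_iff.mp hU⟩
  have hmem : ∀ φ, MapClusterPt φ l (e ∘ x) → r φ ∈ S := fun φ hφ => by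
    obtain ⟨U, hUl, hU⟩ := hcluster φ hφ
    exact hclust _ U inferInstance hUl hU
  obtain ⟨φ, -, hφ⟩ := (WeakDual.isCompact_closedBall 0 M).exists_mapClusterPt_of_frequently
    hxK.frequently
  refine ⟨r φ, hmem φ hφ, tendsto_toWeakDual_toDual_iff.mp ?_⟩
  change Tendsto (e ∘ x) l (𝓝 (e (r φ)))
  rw [he]
  refine (WeakDual.isCompact_closedBall 0 M).tendsto_nhds_of_unique_mapClusterPt hxK
    fun ψ _ hψ => ?_
  obtain ⟨U, hUl, hU⟩ := hcluster φ hφ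
  obtain ⟨V, hVl, hV⟩ := hcluster ψ hψ
  obtain ⟨L₀, hL₀⟩ := hdist _ (hmem φ hφ)
  obtain ⟨L₁, hL₁⟩ := hdist _ (hmem ψ hψ)
  rw [← he ψ, ← he φ, eq_of_weak_clusterPt_of_tendsto_norm_sub_sq hVl hUl hL₁ hL₀ hV hU]

end Opial

namespace IsCLSolution

variable {H : Type*} [NormedAddCommGroup H] [InnerProductSpace ℝ H] {A : H → Set H} {p : ℕ}
  {θ : ℝ} {T : Set ℝ} {x : ℝ → H} {lam : ℝ → ℝ} {y : ℝ → H}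

theorem inner_sub_le_neg_norm_sq (hsol : IsCLSolution A p θ T x lam y)
    (hA : IsMonotoneOperator A) {z : H} (hz : 0 ∈ A z) {t : ℝ} (ht : t ∈ T) :
    ⟪y t - x t, x t - z⟫ ≤ -‖y t - x t‖ ^ 2 := by
  obtain ⟨hpos, -, hres, -⟩ := hsol
  have hzz : z - z ∈ lam t • A z := by rw [sub_self]; exact Set.zero_mem_smul_set hz
  have key := hA.norm_sq_le_inner_of_sub_mem_smul (hpos t ht) (hres t ht) hzz
  rw [sub_self, sub_zero] at key
  rw [← neg_sub (x t), inner_neg_left, norm_neg]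
  linarith

theorem antitoneOn_norm_sub_sq_add_mul (hsol : IsCLSolution A p θ T x lam y)
    (hA : IsMonotoneOperator A) (hT : Convex ℝ T) {z : H} (hz : 0 ∈ A z) {c : ℝ}
    (hc : ∀ t ∈ T, c ≤ ‖y t - x t‖ ^ 2) :
    AntitoneOn (fun t => ‖x t - z‖ ^ 2 + 2 * c * t) T := by
  obtain ⟨-, -, -, hderiv, -⟩ := id hsol
  refine hT.antitoneOn_of_hasDerivWithinAt_nonpos
    (f' := fun t => 2 * ⟪x t - z, y t - x t⟫ + 2 * c) (fun t ht => ?_) (fun t ht => ?_)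
  · simpa using ((hderiv t ht).sub_const z).norm_sq.fun_add
      ((hasDerivAt_id t).const_mul (2 * c)).hasDerivWithinAt
  · have := hsol.inner_sub_le_neg_norm_sq hA hz ht
    rw [real_inner_comm] at this
    linarith [hc t ht]

theorem exists_tendsto_norm_sub_sq (hsol : IsCLSolution A p θ (Ici 0) x lam y)
    (hA : IsMonotoneOperator A) {z : H} (hz : 0 ∈ A z) :
    ∃ L, Tendsto (fun t => ‖x t - z‖ ^ 2) atTop (𝓝 L) := by
  have hanti := hsol.antitoneOn_norm_sub_sq_add_mul hA (convex_Ici 0) hz (c := 0)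
    fun t _ => sq_nonneg _
  simp only [mul_zero, zero_mul, add_zero] at hanti
  obtain ⟨L, -, -, hL⟩ := hanti.exists_tendsto_atTop fun t _ => sq_nonneg ‖x t - z‖
  exact ⟨L, hL⟩

theorem antitoneOn_norm_shift_sub_sq (hsol : IsCLSolution A p θ (Ici 0) x lam y)
    (hA : IsMonotoneOperator A) {c : ℝ} (hlam : ∀ t ∈ Ici 0, lam t = c) {h : ℝ} (hh : 0 ≤ h) :
    AntitoneOn (fun t => ‖x (t + h) - x t‖ ^ 2) (Ici 0) := by
  obtain ⟨hpos, -, hres, hderiv, -⟩ := hsol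
  have hth : ∀ t ∈ Ici (0 : ℝ), t + h ∈ Ici 0 := fun t ht => add_nonneg ht hh
  refine (convex_Ici 0).antitoneOn_of_hasDerivWithinAt_nonpos
    (f' := fun t => 2 * ⟪x (t + h) - x t, (y (t + h) - x (t + h)) - (y t - x t)⟫)
    (fun t ht => ?_) (fun t ht => ?_)
  · have hshift : HasDerivWithinAt (fun s => x (s + h)) (y (t + h) - x (t + h)) (Ici 0) t := by
      simpa [Function.comp_def] using (hderiv _ (hth t ht)).scomp t
        ((hasDerivAt_id t).add_const h).hasDerivWithinAt hth
    exact (hshift.sub (hderiv t ht)).norm_sq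
  · have hc : 0 < c := hlam t ht ▸ hpos t ht
    have key := hA.norm_sq_le_inner_of_sub_mem_smul hc
      (hlam (t + h) (hth t ht) ▸ hres _ (hth t ht)) (hlam t ht ▸ hres t ht)
    have hflip : (y (t + h) - x (t + h)) - (y t - x t)
        = -((x (t + h) - y (t + h)) - (x t - y t)) := by abel
    rw [hflip, inner_neg_right, real_inner_comm]
    nlinarith [sq_nonneg ‖(x (t + h) - y (t + h)) - (x t - y t)‖]

theorem antitoneOn_norm_sub (hsol : IsCLSolution A p θ (Ici 0) x lam y)
    (hA : IsMonotoneOperator A) (hlam : MonotoneOn lam (Ici 0)) :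
    AntitoneOn (fun t => ‖y t - x t‖) (Ici 0) := by
  obtain ⟨hpos, -, -, hderiv, -, halg⟩ := id hsol
  rcases Nat.eq_zero_or_pos (p - 1) with hp | hp
  · have hconst : ∀ t ∈ Ici (0 : ℝ), lam t = θ := fun t ht => by simpa [hp] using halg t ht
    have hslope : ∀ r ∈ Ici (0 : ℝ),
        Tendsto (fun h => ‖x (r + h) - x r‖ / h) (𝓝[>] 0) (𝓝 ‖y r - x r‖) := fun r hr => by
      refine ((hderiv r hr).mono (Ici_subset_Ici.mpr hr)).tendsto_slope_zero_right_of_Ici.norm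
        |>.congr' ?_
      filter_upwards [self_mem_nhdsWithin] with h (hh : 0 < h)
      rw [norm_smul, norm_inv, Real.norm_of_nonneg hh.le, inv_mul_eq_div]
    intro s hs t ht hst
    refine le_of_tendsto_of_tendsto (hslope t ht) (hslope s hs) ?_
    filter_upwards [self_mem_nhdsWithin] with h (hh : 0 < h)
    have hsq := hsol.antitoneOn_norm_shift_sub_sq hA hconst hh.le hs ht hst
    gcongr
    exact (pow_le_pow_iff_left₀ (norm_nonneg _) (norm_nonneg _) two_ne_zero).mp hsq
  · exact antitoneOn_of_mul_pow_eq hlam hpos (fun _ _ => norm_nonneg _) hp.ne' halg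

/-- If the speed stayed above `c > 0`, `‖x t - z‖ ^ 2` would decrease at rate `2 c ^ 2` forever. -/
theorem tendsto_norm_sub_zero (hsol : IsCLSolution A p θ (Ici 0) x lam y)
    (hA : IsMonotoneOperator A) (hlam : MonotoneOn lam (Ici 0)) {z : H} (hz : 0 ∈ A z) :
    Tendsto (fun t => ‖y t - x t‖) atTop (𝓝 0) := by
  obtain ⟨c, hc0, hc, hlim⟩ :=
    (hsol.antitoneOn_norm_sub hA hlam).exists_tendsto_atTop fun t _ => norm_nonneg _
  suffices c = 0 by rwa [this] at hlim
  have hanti := hsol.antitoneOn_norm_sub_sq_add_mul hA (convex_Ici 0) hz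
    fun t ht => pow_le_pow_left₀ hc0 (hc t ht) 2
  by_contra hne
  have hcpos : 0 < c ^ 2 := by positivity
  have ht : 0 ≤ ‖x 0 - z‖ ^ 2 / (2 * c ^ 2) + 1 := by positivity
  have hdecay := hanti self_mem_Ici ht ht
  have ht' : 2 * c ^ 2 * (‖x 0 - z‖ ^ 2 / (2 * c ^ 2) + 1) = ‖x 0 - z‖ ^ 2 + 2 * c ^ 2 := by
    field_simp
  simp only [mul_zero, add_zero, ht'] at hdecay
  nlinarith [sq_nonneg ‖x (‖x 0 - z‖ ^ 2 / (2 * c ^ 2) + 1) - z‖]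

theorem zero_mem_of_weak_tendsto (hsol : IsCLSolution A p θ (Ici 0) x lam y)
    (hA : IsMonotoneOperator A)
    (hmax : ∀ v x : H, (∀ z u : H, u ∈ A z → 0 ≤ ⟪v - u, x - z⟫) → v ∈ A x)
    (hlam : MonotoneOn lam (Ici 0)) (hspeed : Tendsto (fun t => ‖y t - x t‖) atTop (𝓝 0))
    (hx : ∃ C, ∀ᶠ t in atTop, ‖x t‖ ≤ C) {G : Filter ℝ} [G.NeBot] (hG : G ≤ atTop) {w : H}
    (hw : ∀ h, Tendsto (fun t => ⟪x t, h⟫) G (𝓝 ⟪w, h⟫)) :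
    0 ∈ A w := by
  obtain ⟨hpos, -, hres, -⟩ := hsol
  obtain ⟨C, hC⟩ := hx
  have hspeedG := hspeed.mono_left hG
  have hG0 : ∀ᶠ t in G, 0 ≤ t := hG (eventually_ge_atTop 0)
  refine hA.mem_of_tendsto_of_weak_tendsto hmax (G := G) (y := y)
    (v := fun t => (lam t)⁻¹ • (x t - y t)) ?_ ?_ (fun h => ?_) ⟨1 + C, ?_⟩
  · filter_upwards [hG0] with t ht
    exact (Set.mem_smul_set_iff_inv_smul_mem₀ (hpos t ht).ne' _ _).mp (hres t ht)
  · refine squeeze_zero_norm' ?_ (by simpa using hspeedG.const_mul (lam 0)⁻¹)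
    filter_upwards [hG0] with t ht
    rw [norm_smul, norm_inv, Real.norm_of_nonneg (hpos t ht).le, norm_sub_rev]
    gcongr
    · exact hpos 0 self_mem_Ici
    · exact hlam self_mem_Ici ht ht
  · have hsmall : Tendsto (fun t => ⟪y t - x t, h⟫) G (𝓝 0) :=
      squeeze_zero_norm (fun t => norm_inner_le_norm _ _) (by simpa using hspeedG.mul_const ‖h‖)
    simpa [inner_sub_left] using (hw h).add hsmall
  · filter_upwards [hG hC, hspeedG.eventually (gt_mem_nhds one_pos)] with t hxt hyt
    calc ‖y t‖ ≤ ‖y t - x t‖ + ‖x t‖ := norm_le_norm_sub_add _ _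
      _ ≤ 1 + C := add_le_add hyt.le hxt

end IsCLSolution

theorem stmt_8_general {H : Type*} [NormedAddCommGroup H] [InnerProductSpace ℝ H] [CompleteSpace H]
    (A : H → Set H)
    (hmono : ∀ x y u v : H, u ∈ A x → v ∈ A y → 0 ≤ ⟪u - v, x - y⟫)
    (hmax : ∀ v x : H, (∀ z u : H, u ∈ A z → 0 ≤ ⟪v - u, x - z⟫) → v ∈ A x)
    (hne : ∃ z : H, 0 ∈ A z)
    (p : ℕ) (θ : ℝ)
    (x : ℝ → H) (lam : ℝ → ℝ) (y : ℝ → H)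
    (hsol : IsCLSolution A p θ (Ici 0) x lam y)
    (hlam : MonotoneOn lam (Ici 0)) :
    ∃ xbar : H, 0 ∈ A xbar ∧
      ∀ h : H, Tendsto (fun t => ⟪x t - xbar, h⟫) atTop (nhds 0) := by
  obtain ⟨z, hz⟩ := hne
  have hdist : ∀ w ∈ {w | 0 ∈ A w}, ∃ L, Tendsto (fun t => ‖x t - w‖ ^ 2) atTop (𝓝 L) :=
    fun w hw => hsol.exists_tendsto_norm_sub_sq hmono hw
  obtain ⟨L, hL⟩ := hdist z hz
  obtain ⟨xbar, hxbar, hweak⟩ := exists_weak_tendsto_of_opial ⟨z, hz⟩ hdist fun w G _ hG hw =>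
    hsol.zero_mem_of_weak_tendsto hmono hmax hlam (hsol.tendsto_norm_sub_zero hmono hlam hz)
      (exists_eventually_norm_le_of_tendsto_norm_sub_sq hL) hG hw
  refine ⟨xbar, hxbar, fun h => ?_⟩
  simpa [inner_sub_left] using (hweak h).sub_const ⟪xbar, h⟫

/-- If `A` is maximal monotone with `A⁻¹(0) ≠ ∅`, then the trajectory of a
global solution of the closed-loop control system converges weakly to some zero of `A`. -/
theorem stmt_8 {H : Type*} [NormedAddCommGroup H] [InnerProductSpace ℝ H] [CompleteSpace H]
    (A : H → Set H)
    (hmono : ∀ x y u v : H, u ∈ A x → v ∈ A y → 0 ≤ ⟪u - v, x - y⟫)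
    (hmax : ∀ v x : H, (∀ z u : H, u ∈ A z → 0 ≤ ⟪v - u, x - z⟫) → v ∈ A x)
    (hne : ∃ z : H, 0 ∈ A z)
    (p : ℕ) (hp : 1 ≤ p) (θ : ℝ) (hθ : 0 < θ)
    (x : ℝ → H) (lam : ℝ → ℝ) (y : ℝ → H)
    (hsol : IsCLSolution A p θ (Ici 0) x lam y)
    (hlam : MonotoneOn lam (Ici 0)) :
    ∃ xbar : H, 0 ∈ A xbar ∧
      ∀ h : H, Tendsto (fun t => ⟪x t - xbar, h⟫) atTop (nhds 0) :=
  stmt_8_general A hmono hmax hne p θ x lam y hsol hlam
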